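/- Suppose each ∇F_i is Lipschitz continuous with constant L_i > 0 and each F_i is strongly convex with modulus μ_i > 0; let σ ∈ (0, 1/2] and γ ∈ (0,1). Let x, x′ ∈ ℝⁿ with x ≠ x′, set s = x − x′ and α_i = ⟨s, ∇F_i(x) − ∇F_i(x′)⟩/‖s‖² for each i, and let d ∈ ℝⁿ with d ≠ 0 satisfy ⟨∇F_i(x), d⟩ ≤ −α_i‖d‖² for every i ∈ {1,…,m}. If β is an Armijo backtracking stepsize for direction d at x with parameters σ, γ, then min{1, min_{1≤i≤m} 2γ(1−σ)μ_i/L_i} ≤ β ≤ 1. -/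

import Mathlib

/-!
Strong convexity makes each gradient strongly monotone, so `μ_i ≤ α_i` and hence
`⟪∇F_i x, d⟫ ≤ -μ_i ‖d‖²`. If backtracking stopped below `1`, the Armijo condition fails at
`t = β / γ` for some `i`; combined with the descent lemma
`F_i (x + t d) ≤ F_i x + t ⟪∇F_i x, d⟫ + L_i t² ‖d‖² / 2` this forces `2 (1 - σ) μ_i / L_i < t`.

Since `gradient` is junk (zero) where a function is not differentiable, differentiability of `F_i`
has to be derived: a convex function is differentiable on a dense set (Rademacher), there the
supporting-hyperplane inequality holds, continuity of the gradient extends it to every point, and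
applied at both ends of `[z, y]` it squeezes `F_i y - F_i z - ⟪∇F_i z, y - z⟫` between `0` and
`‖∇F_i y - ∇F_i z‖ ‖y - z‖ = o(‖y - z‖)`.
-/

open scoped RealInnerProductSpace

/-- `φ_g(d) = max_{1 ≤ i ≤ m} ⟨g_i, d⟩ + ‖d‖²/2`. -/
noncomputable def phi {n m : ℕ} (g : Fin m → EuclideanSpace ℝ (Fin n))
    (d : EuclideanSpace ℝ (Fin n)) : ℝ :=
  (⨆ i, ⟪g i, d⟫) + ‖d‖ ^ 2 / 2

/-- The Armijo condition at stepsize `β` for direction `d` at `x`: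
`F_i(x + βd) - F_i(x) ≤ σβ⟨∇F_i(x), d⟩` for every `i`. -/
def ArmijoAt {n m : ℕ} (F : Fin m → EuclideanSpace ℝ (Fin n) → ℝ)
    (x d : EuclideanSpace ℝ (Fin n)) (σ β : ℝ) : Prop :=
  ∀ i, F i (x + β • d) - F i x ≤ σ * β * ⟪gradient (F i) x, d⟫

/-- `β` is an Armijo backtracking stepsize: `β ∈ (0,1]`, the Armijo condition holds at `β`,
and either `β = 1` or the Armijo condition fails (for some index) at `β/γ`. -/
def ArmijoBacktrack {n m : ℕ} (F : Fin m → EuclideanSpace ℝ (Fin n) → ℝ)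
    (x d : EuclideanSpace ℝ (Fin n)) (σ γ β : ℝ) : Prop :=
  0 < β ∧ β ≤ 1 ∧ ArmijoAt F x d σ β ∧ (β = 1 ∨ ¬ ArmijoAt F x d σ (β / γ))

open scoped NNReal
open Set MeasureTheory

theorem LocallyLipschitz.dense_differentiableAt {E F : Type*} [NormedAddCommGroup E]
    [NormedSpace ℝ E] [FiniteDimensional ℝ E] [NormedAddCommGroup F] [NormedSpace ℝ F]
    [FiniteDimensional ℝ F] {f : E → F} (hf : LocallyLipschitz f) :
    Dense {x | DifferentiableAt ℝ f x} := by
  let _ : MeasurableSpace E := borel E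
  have _ : BorelSpace E := ⟨rfl⟩
  refine dense_iff_inter_open.mpr fun U hU ⟨z, hz⟩ => ?_
  obtain ⟨K, t, ht, hK⟩ := hf z
  have hae : ∀ᵐ x ∂(Module.finBasis ℝ E).addHaar, x ∈ interior t → DifferentiableAt ℝ f x := by
    filter_upwards [hK.ae_differentiableWithinAt_of_mem] with x hx hxt
    exact (hx (interior_subset hxt)).differentiableAt (mem_interior_iff_mem_nhds.mp hxt)
  obtain ⟨x, ⟨hxU, hxt⟩, hx⟩ := (Measure.dense_of_ae hae).inter_open_nonempty _
    (hU.inter isOpen_interior) ⟨z, hz, mem_interior_iff_mem_nhds.mpr ht⟩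
  exact ⟨x, hxU, hx hxt⟩

section Gradient

variable {E : Type*} [NormedAddCommGroup E] [InnerProductSpace ℝ E] [CompleteSpace E]
  {f : E → ℝ}

theorem HasGradientAt.hasDerivAt_add_smul {g x d : E} {t : ℝ}
    (hf : HasGradientAt f g (x + t • d)) :
    HasDerivAt (fun s : ℝ => f (x + s • d)) ⟪g, d⟫ t := by
  have hline : HasDerivAt (fun s : ℝ => x + s • d) d t := by
    simpa using ((hasDerivAt_id t).smul_const d).const_add x
  simpa [Function.comp_def, InnerProductSpace.toDual_apply_apply] using
    (hasGradientAt_iff_hasFDerivAt.mp hf).comp_hasDerivAt t hline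

theorem ConvexOn.add_inner_le_of_hasGradientAt (hf : ConvexOn ℝ univ f) {g z : E}
    (hg : HasGradientAt f g z) (y : E) : f z + ⟪g, y - z⟫ ≤ f y := by
  have hline : ConvexOn ℝ univ (fun t : ℝ => f (z + t • (y - z))) := by
    simpa [Function.comp_def, AffineMap.lineMap_apply_module', add_comm] using
      hf.comp_affineMap (AffineMap.lineMap z y)
  have hderiv : HasDerivAt (fun t : ℝ => f (z + t • (y - z))) ⟪g, y - z⟫ 0 :=
    HasGradientAt.hasDerivAt_add_smul (by simpa using hg)
  have hslope := hline.le_slope_of_hasDerivAt (mem_univ 0) (mem_univ 1) one_pos hderiv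
  simp only [slope_def_field, one_smul, add_sub_cancel, zero_smul, add_zero, sub_zero,
    div_one] at hslope
  linarith

theorem StrongConvexOn.add_inner_add_le_of_hasGradientAt {μ : ℝ} (hf : StrongConvexOn univ μ f)
    {g z : E} (hg : HasGradientAt f g z) (y : E) :
    f z + ⟪g, y - z⟫ + μ / 2 * ‖y - z‖ ^ 2 ≤ f y := by
  have hgrad : HasGradientAt (fun x => f x - μ / 2 * ‖x‖ ^ 2) (g - μ • z) z := by
    rw [hasGradientAt_iff_hasFDerivAt] at hg ⊢
    refine (hg.sub ((hasStrictFDerivAt_norm_sq z).hasFDerivAt.const_mul (μ / 2))).congr_fderiv ?_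
    ext v
    simp only [sub_apply, InnerProductSpace.toDual_apply_apply,
      smul_apply, coe_innerSL_apply, nsmul_eq_mul, Nat.cast_ofNat,
      smul_eq_mul, map_sub, map_smul, sub_right_inj]
    ring
  have h := (strongConvexOn_iff_convex.mp hf).add_inner_le_of_hasGradientAt hgrad y
  rw [norm_sub_sq_real]
  simp only [inner_sub_left, inner_sub_right, real_inner_smul_left,
    real_inner_self_eq_norm_sq] at h ⊢
  rw [real_inner_comm y z] at h
  linarith

theorem StrongConvexOn.mul_sq_norm_sub_le_inner {μ : ℝ} (hf : StrongConvexOn univ μ f)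
    {x x' g g' : E} (hg : HasGradientAt f g x) (hg' : HasGradientAt f g' x') :
    μ * ‖x - x'‖ ^ 2 ≤ ⟪x - x', g - g'⟫ := by
  have h := hf.add_inner_add_le_of_hasGradientAt hg x'
  have h' := hf.add_inner_add_le_of_hasGradientAt hg' x
  rw [norm_sub_rev] at h
  simp only [inner_sub_left, inner_sub_right] at h h' ⊢
  linarith [real_inner_comm x g, real_inner_comm x' g, real_inner_comm x g', real_inner_comm x' g']

theorem ConvexOn.add_inner_gradient_le [FiniteDimensional ℝ E] (hf : ConvexOn ℝ univ f)
    (hg : Continuous (gradient f)) (z y : E) : f z + ⟪gradient f z, y - z⟫ ≤ f y := by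
  have hdense : Dense {w | DifferentiableAt ℝ f w} := hf.locallyLipschitz.dense_differentiableAt
  have hcont : Continuous fun w => f w + ⟪gradient f w, y - w⟫ := by
    have hfc := hf.locallyLipschitz.continuous
    fun_prop
  exact le_on_closure (fun w hw => hf.add_inner_le_of_hasGradientAt hw.hasGradientAt y)
    hcont.continuousOn continuousOn_const (hdense.closure_eq ▸ mem_univ z)

theorem ConvexOn.hasGradientAt_of_continuous_gradient [FiniteDimensional ℝ E]
    (hf : ConvexOn ℝ univ f) (hg : Continuous (gradient f)) (z : E) :
    HasGradientAt f (gradient f z) z := by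
  rw [hasGradientAt_iff_isLittleO, Asymptotics.isLittleO_iff]
  intro c hc
  filter_upwards [Metric.tendsto_nhds.mp (hg.tendsto z) c hc] with y hy
  rw [dist_eq_norm] at hy
  have hlow := hf.add_inner_gradient_le hg z y
  have hup := hf.add_inner_gradient_le hg y z
  rw [← neg_sub y z, inner_neg_right] at hup
  rw [Real.norm_of_nonneg (by linarith)]
  calc f y - f z - ⟪gradient f z, y - z⟫ ≤ ⟪gradient f y - gradient f z, y - z⟫ := by
        rw [inner_sub_left]
        linarith
    _ ≤ ‖gradient f y - gradient f z‖ * ‖y - z‖ := real_inner_le_norm _ _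
    _ ≤ c * ‖y - z‖ := by gcongr

theorem le_add_inner_add_of_lipschitzWith_gradient
    (hf : ∀ z, HasGradientAt f (gradient f z) z) {K : ℝ≥0}
    (hK : LipschitzWith K (gradient f)) (x y : E) :
    f y ≤ f x + ⟪gradient f x, y - x⟫ + K / 2 * ‖y - x‖ ^ 2 := by
  set d := y - x
  let ψ : ℝ → ℝ := fun t => f (x + t • d) - t * ⟪gradient f x, d⟫ - K / 2 * t ^ 2 * ‖d‖ ^ 2
  have hψ : ∀ t, HasDerivAt ψ
      (⟪gradient f (x + t • d), d⟫ - ⟪gradient f x, d⟫ - K * t * ‖d‖ ^ 2) t := by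
    intro t
    have hline : HasDerivAt (fun s : ℝ => f (x + s • d)) ⟪gradient f (x + t • d), d⟫ t :=
      (hf _).hasDerivAt_add_smul
    have hlin := (hasDerivAt_id t).mul_const ⟪gradient f x, d⟫
    have hquad := ((hasDerivAt_pow 2 t).const_mul ((K : ℝ) / 2)).mul_const (‖d‖ ^ 2)
    exact ((hline.sub hlin).sub hquad).congr_deriv (by push_cast; ring)
  have hψ' : ∀ t, 0 < t →
      ⟪gradient f (x + t • d), d⟫ - ⟪gradient f x, d⟫ ≤ K * t * ‖d‖ ^ 2 := by
    intro t ht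
    calc ⟪gradient f (x + t • d), d⟫ - ⟪gradient f x, d⟫
        = ⟪gradient f (x + t • d) - gradient f x, d⟫ := (inner_sub_left _ _ _).symm
      _ ≤ ‖gradient f (x + t • d) - gradient f x‖ * ‖d‖ := real_inner_le_norm _ _
      _ ≤ K * ‖(x + t • d) - x‖ * ‖d‖ := by
        gcongr
        rw [← dist_eq_norm, ← dist_eq_norm]
        exact hK.dist_le_mul _ _
      _ = K * t * ‖d‖ ^ 2 := by
        rw [add_sub_cancel_left, norm_smul, Real.norm_of_nonneg ht.le]; ring
  have hanti : AntitoneOn ψ (Ici 0) := by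
    refine antitoneOn_of_deriv_nonpos (convex_Ici 0)
      (HasDerivAt.continuousOn fun t _ => hψ t)
      (fun t _ => (hψ t).differentiableAt.differentiableWithinAt) fun t ht => ?_
    rw [interior_Ici] at ht
    rw [(hψ t).deriv]
    linarith [hψ' t ht]
  have hend : x + (1 : ℝ) • d = y := by simp [d]
  have hψ10 := hanti self_mem_Ici (mem_Ici.mpr zero_le_one) zero_le_one
  simp only [ψ, hend, zero_smul, add_zero] at hψ10
  linarith

theorem lt_stepsize_of_armijo_fails (hf : ∀ z, HasGradientAt f (gradient f z) z) {K : ℝ≥0}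
    (hK : LipschitzWith K (gradient f)) (hK0 : 0 < K) {μ σ t : ℝ} {x d : E} (hσ : σ ≤ 1)
    (hd : ⟪gradient f x, d⟫ ≤ -μ * ‖d‖ ^ 2) (ht : 0 < t)
    (hfail : σ * t * ⟪gradient f x, d⟫ < f (x + t • d) - f x) :
    2 * (1 - σ) * μ / K < t := by
  have hdesc := le_add_inner_add_of_lipschitzWith_gradient hf hK x (x + t • d)
  rw [add_sub_cancel_left, inner_smul_right, norm_smul, Real.norm_of_nonneg ht.le] at hdesc
  have hneg : (1 - σ) * t * (μ * ‖d‖ ^ 2) ≤ (1 - σ) * t * -⟪gradient f x, d⟫ :=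
    mul_le_mul_of_nonneg_left (by linarith) (mul_nonneg (by linarith) ht.le)
  have hcompare : 2 * (1 - σ) * μ * (t * ‖d‖ ^ 2) < K * t * (t * ‖d‖ ^ 2) := by linarith
  have hd0 : 0 < t * ‖d‖ ^ 2 := by
    refine lt_of_le_of_ne (by positivity) fun h0 => ?_
    rw [← h0, mul_zero, mul_zero] at hcompare
    exact lt_irrefl 0 hcompare
  rw [div_lt_iff₀ (by exact_mod_cast hK0)]
  linarith [lt_of_mul_lt_mul_right hcompare hd0.le]

end Gradient

theorem stmt_17_general {n m : ℕ} (hm : 0 < m) (F : Fin m → EuclideanSpace ℝ (Fin n) → ℝ)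
    (L mu : Fin m → ℝ) (hL : ∀ i, 0 < L i) (hmu : ∀ i, 0 < mu i)
    (hlip : ∀ i, LipschitzWith (L i).toNNReal (fun y => gradient (F i) y))
    (hsc : ∀ i, ConvexOn ℝ Set.univ (fun y : EuclideanSpace ℝ (Fin n) =>
      F i y - mu i / 2 * ‖y‖ ^ 2))
    (σ γ : ℝ) (hσ1 : σ ≤ 1 / 2) (hγ : γ ∈ Set.Ioo (0 : ℝ) 1)
    (x x' : EuclideanSpace ℝ (Fin n)) (hxx : x ≠ x')
    (α : Fin m → ℝ)
    (hα : ∀ i, α i = ⟪x - x', gradient (F i) x - gradient (F i) x'⟫ / ‖x - x'‖ ^ 2)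
    (d : EuclideanSpace ℝ (Fin n))
    (hdi : ∀ i, ⟪gradient (F i) x, d⟫ ≤ -(α i) * ‖d‖ ^ 2)
    (β : ℝ) (hβ : ArmijoBacktrack F x d σ γ β) :
    min 1 (Finset.univ.inf' (Finset.univ_nonempty_iff.mpr ⟨⟨0, hm⟩⟩)
      (fun i => 2 * γ * (1 - σ) * mu i / L i)) ≤ β ∧ β ≤ 1 := by
  obtain ⟨hβ0, hβ1, -, hβ⟩ := hβ
  refine ⟨?_, hβ1⟩
  rcases hβ with rfl | hfail
  · exact min_le_left _ _
  obtain ⟨i, hi⟩ := not_forall.mp hfail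
  have hstrong : StrongConvexOn univ (mu i) (F i) := strongConvexOn_iff_convex.mpr (hsc i)
  have hgrad : ∀ z, HasGradientAt (F i) (gradient (F i) z) z :=
    (hstrong.strictConvexOn (hmu i)).convexOn.hasGradientAt_of_continuous_gradient
      (hlip i).continuous
  have hmu_le : mu i ≤ α i := by
    rw [hα i, le_div_iff₀ (pow_pos (norm_pos_iff.mpr (sub_ne_zero.mpr hxx)) 2)]
    exact hstrong.mul_sq_norm_sub_le_inner (hgrad x) (hgrad x')
  have hdescent : ⟪gradient (F i) x, d⟫ ≤ -mu i * ‖d‖ ^ 2 :=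
    (hdi i).trans (mul_le_mul_of_nonneg_right (neg_le_neg hmu_le) (sq_nonneg _))
  have hstep := lt_stepsize_of_armijo_fails hgrad (hlip i) (Real.toNNReal_pos.mpr (hL i))
    (by linarith) hdescent (div_pos hβ0 hγ.1) (not_le.mp hi)
  rw [Real.coe_toNNReal _ (hL i).le] at hstep
  calc _ ≤ 2 * γ * (1 - σ) * mu i / L i :=
        (min_le_right _ _).trans (Finset.inf'_le _ (Finset.mem_univ i))
    _ = γ * (2 * (1 - σ) * mu i / L i) := by ring
    _ ≤ γ * (β / γ) := by gcongr; exact hγ.1.le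
    _ = β := mul_div_cancel₀ _ hγ.1.ne'

theorem stmt_17 {n m : ℕ} (hm : 0 < m) (F : Fin m → EuclideanSpace ℝ (Fin n) → ℝ)
    (L mu : Fin m → ℝ) (hL : ∀ i, 0 < L i) (hmu : ∀ i, 0 < mu i)
    (hlip : ∀ i, LipschitzWith (L i).toNNReal (fun y => gradient (F i) y))
    (hsc : ∀ i, ConvexOn ℝ Set.univ (fun y : EuclideanSpace ℝ (Fin n) =>
      F i y - mu i / 2 * ‖y‖ ^ 2))
    (σ γ : ℝ) (hσ0 : 0 < σ) (hσ1 : σ ≤ 1 / 2) (hγ : γ ∈ Set.Ioo (0 : ℝ) 1)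
    (x x' : EuclideanSpace ℝ (Fin n)) (hxx : x ≠ x')
    (α : Fin m → ℝ)
    (hα : ∀ i, α i = ⟪x - x', gradient (F i) x - gradient (F i) x'⟫ / ‖x - x'‖ ^ 2)
    (d : EuclideanSpace ℝ (Fin n)) (hd : d ≠ 0)
    (hdi : ∀ i, ⟪gradient (F i) x, d⟫ ≤ -(α i) * ‖d‖ ^ 2)
    (β : ℝ) (hβ : ArmijoBacktrack F x d σ γ β) :
    min 1 (Finset.univ.inf' (Finset.univ_nonempty_iff.mpr ⟨⟨0, hm⟩⟩)
      (fun i => 2 * γ * (1 - σ) * mu i / L i)) ≤ β ∧ β ≤ 1 :=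
  stmt_17_general hm F L mu hL hmu hlip hsc σ γ hσ1 hγ x x' hxx α hα d hdi β hβ
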